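/- arXiv:1711.00089 — 2 statements merged into one kernel-verified Lean document; each statement's English description precedes it below -/
import Mathlib

section
/- Let M_j = x_0^{a_{0,j}}···x_n^{a_{n,j}}, j ∈ J, be monomials with all exponents ≥ 1 and a_{0,j} ≤ a_{i,j} for all i,j. Set I = (X_0) + ⋂_{j∈J} M_j^⊥ in T = ℂ[X_0,...,X_n]. Then a monomial N of T does not lie in I if and only if N divides X_1^{a_{1,j}}···X_n^{a_{n,j}} for some j ∈ J. -/
/-!
Both summands of `I` are monomial ideals, and a monomial lies in a sum of monomial ideals only if
it lies in one of them (compare coefficients). A monomial `X^N` lies in `(X_0)` iff `N_0 ≥ 1`, and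
in `M_j^⊥` iff `N_i > a_{i,j}` for some `i`; for `N_0 = 0` that `i` cannot be `0`.
-/

open MvPolynomial

namespace MvPolynomial

variable {σ R : Type*} [CommSemiring R]

/-- Equivalent to being spanned by monomials, in a form that is visibly stable under infima. -/
def IsMonomialIdeal (I : Ideal (MvPolynomial σ R)) : Prop :=
  ∀ p ∈ I, ∀ d ∈ p.support, monomial d (1 : R) ∈ I

theorem isMonomialIdeal_span_monomial_image (S : Set (σ →₀ ℕ)) :
    IsMonomialIdeal (Ideal.span ((fun s => monomial s (1 : R)) '' S)) := by
  intro p hp d hd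
  obtain ⟨s, hs, hsd⟩ := mem_ideal_span_monomial_image.1 hp d hd
  refine mem_ideal_span_monomial_image.2 fun d' hd' => ⟨s, hs, ?_⟩
  rwa [Finset.mem_singleton.1 (support_monomial_subset hd')]

theorem IsMonomialIdeal.iInf {ι : Sort*} {I : ι → Ideal (MvPolynomial σ R)}
    (hI : ∀ i, IsMonomialIdeal (I i)) : IsMonomialIdeal (⨅ i, I i) := fun p hp d hd =>
  Ideal.mem_iInf.2 fun i => hI i p (Ideal.mem_iInf.1 hp i) d hd

theorem IsMonomialIdeal.monomial_mem_sup_iff [Nontrivial R] {I K : Ideal (MvPolynomial σ R)}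
    (hI : IsMonomialIdeal I) (hK : IsMonomialIdeal K) (d : σ →₀ ℕ) :
    monomial d (1 : R) ∈ I ⊔ K ↔ monomial d (1 : R) ∈ I ∨ monomial d (1 : R) ∈ K := by
  refine ⟨fun h => ?_, fun h => h.elim (Submodule.mem_sup_left ·) (Submodule.mem_sup_right ·)⟩
  obtain ⟨p, hp, q, hq, hpq⟩ := Submodule.mem_sup.1 h
  have hcoeff : coeff d p + coeff d q = 1 := by
    classical rw [← coeff_add, hpq, coeff_monomial, if_pos rfl]
  by_cases hd : d ∈ p.support
  · exact .inl (hI p hp d hd)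
  · refine .inr (hK q hq d (mem_support_iff.2 ?_))
    rw [notMem_support_iff.1 hd, zero_add] at hcoeff
    exact hcoeff ▸ one_ne_zero

theorem monomial_mem_span_monomial_image_iff [Nontrivial R] {S : Set (σ →₀ ℕ)} {d : σ →₀ ℕ} :
    monomial d (1 : R) ∈ Ideal.span ((fun s => monomial s (1 : R)) '' S) ↔ ∃ s ∈ S, s ≤ d := by
  classical
  rw [mem_ideal_span_monomial_image, support_monomial, if_neg one_ne_zero]
  simp

theorem span_X_eq_span_monomial_image (i : σ) :
    Ideal.span {X i} = Ideal.span ((fun s => monomial s (1 : R)) '' {Finsupp.single i 1}) := by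
  rw [Set.image_singleton, X]

theorem span_X_pow_eq_span_monomial_image (e : σ → ℕ) :
    Ideal.span {P : MvPolynomial σ R | ∃ i, P = X i ^ e i} =
      Ideal.span ((fun s => monomial s (1 : R)) '' Set.range fun i => Finsupp.single i (e i)) := by
  congr 1
  ext P
  simp [X_pow_eq_monomial, eq_comm]

end MvPolynomial

theorem standard_monomials_general (n : ℕ) (J : Type) (a : J → Fin (n + 1) → ℕ) (N : Fin (n + 1) → ℕ) :
    monomial (Finsupp.equivFunOnFinite.symm N) (1 : ℂ) ∉
        Ideal.span {X (0 : Fin (n + 1))} +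
          ⨅ j, Ideal.span {P : MvPolynomial (Fin (n + 1)) ℂ | ∃ i, P = X i ^ (a j i + 1)} ↔
      ∃ j, N 0 = 0 ∧ ∀ i, i ≠ 0 → N i ≤ a j i := by
  simp only [span_X_pow_eq_span_monomial_image, span_X_eq_span_monomial_image, Submodule.add_eq_sup]
  rw [(isMonomialIdeal_span_monomial_image _).monomial_mem_sup_iff
      (IsMonomialIdeal.iInf fun _ => isMonomialIdeal_span_monomial_image _),
    Ideal.mem_iInf]
  simp only [monomial_mem_span_monomial_image_iff, Set.mem_singleton_iff, Set.mem_range,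
    exists_exists_eq_and, exists_eq_left, Finsupp.single_le_iff, Finsupp.coe_equivFunOnFinite_symm]
  constructor
  · intro h
    push Not at h
    obtain ⟨hN0, j, hj⟩ := h
    exact ⟨j, by omega, fun i _ => by linarith [hj i]⟩
  · rintro ⟨j, hN0, hj⟩ (hN0' | h)
    · omega
    · obtain ⟨i, hi⟩ := h j
      rcases eq_or_ne i 0 with rfl | hi0
      · omega
      · linarith [hj i hi0]

/-- Let `M_j = x_0^{a_{0,j}} ⋯ x_n^{a_{n,j}}`, `j ∈ J`, with all exponents `≥ 1` and
`a_{0,j} ≤ a_{i,j}` for all `i, j`.  With `M_j^⊥ = (X_0^{a_{0,j}+1},…,X_n^{a_{n,j}+1})` and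
`I = (X_0) + ⋂_j M_j^⊥` in `T = ℂ[X_0,…,X_n]`, a monomial `X^N` does not lie in `I` iff
`X^N` divides `X_1^{a_{1,j}} ⋯ X_n^{a_{n,j}}` for some `j ∈ J`. -/
theorem standard_monomials (n : ℕ) (J : Type) [Fintype J] (a : J → Fin (n + 1) → ℕ)
    (h1 : ∀ j i, 1 ≤ a j i) (h0 : ∀ j i, a j 0 ≤ a j i) (N : Fin (n + 1) → ℕ) :
    monomial (Finsupp.equivFunOnFinite.symm N) (1 : ℂ) ∉
        Ideal.span {X (0 : Fin (n + 1))} +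
          ⨅ j, Ideal.span {P : MvPolynomial (Fin (n + 1)) ℂ | ∃ i, P = X i ^ (a j i + 1)} ↔
      ∃ j, N 0 = 0 ∧ ∀ i, i ≠ 0 → N i ≤ a j i :=
  standard_monomials_general n J a N
end

section
/- With the setup of Proposition 2.3 (monomials M_j = x_0^{a_{0,j}}···x_n^{a_{n,j}}, 1 ≤ a_{0,j} ≤ a_{i,j} for all i,j), the ℂ-vector space dimension of A = T/((X_0) + ⋂_{j∈J} M_j^⊥) equals ∑_{∅≠S⊆J} (−1)^{|S|+1} ∏_{i=1}^n (min_{j∈S} a_{i,j} + 1). -/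
/-!
All ideals involved are monomial ideals: each is spanned by the monomials whose exponents lie in
an upper set `D ⊆ ℕ^{n+1}`, and the standard monomials, with exponents in `Dᶜ`, form a basis of
the quotient. Sums and intersections of monomial ideals correspond to unions and intersections of
upper sets, so here `Dᶜ` consists of the exponents `d` with `d₀ = 0` lying below some
`(0, a_{1,j}, …, a_{n,j})`: a union of boxes. Inclusion–exclusion counts it, the boxes indexed by
`S` meeting in the box below their meet, of size `∏ i, (min_{j ∈ S} a_{i,j} + 1)`.
-/

open MvPolynomial Finset

namespace MvPolynomial

variable {σ R : Type*} [CommSemiring R]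

theorem mem_restrictSupportIdeal_iff {D : Set (σ →₀ ℕ)} (hD : IsUpperSet D)
    {p : MvPolynomial σ R} : p ∈ restrictSupportIdeal R D hD ↔ ↑p.support ⊆ D :=
  .rfl

theorem restrictSupportIdeal_eq_span {D : Set (σ →₀ ℕ)} (hD : IsUpperSet D) :
    restrictSupportIdeal R D hD = Ideal.span ((fun s => monomial s (1 : R)) '' D) := by
  ext p
  rw [mem_ideal_span_monomial_image, mem_restrictSupportIdeal_iff]
  refine ⟨fun h d hd => ⟨d, h hd, le_rfl⟩, fun h d hd => ?_⟩
  obtain ⟨e, he, hed⟩ := h d hd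
  exact hD hed he

theorem span_monomial_image_eq_restrictSupportIdeal (S : Set (σ →₀ ℕ)) :
    Ideal.span ((fun s => monomial s (1 : R)) '' S) =
      restrictSupportIdeal R (upperClosure S) (upperClosure S).upper := by
  ext p
  rw [mem_ideal_span_monomial_image, mem_restrictSupportIdeal_iff]
  simp [Set.subset_def, mem_upperClosure]

theorem restrictSupportIdeal_sup {D E : Set (σ →₀ ℕ)} (hD : IsUpperSet D) (hE : IsUpperSet E) :
    restrictSupportIdeal R D hD ⊔ restrictSupportIdeal R E hE =
      restrictSupportIdeal R (D ∪ E) (hD.union hE) := by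
  simp only [restrictSupportIdeal_eq_span, Set.image_union, Ideal.span_union]

theorem iInf_restrictSupportIdeal {ι : Type*} {D : ι → Set (σ →₀ ℕ)}
    (hD : ∀ i, IsUpperSet (D i)) :
    ⨅ i, restrictSupportIdeal R (D i) (hD i) =
      restrictSupportIdeal R (⋂ i, D i) (isUpperSet_iInter hD) := by
  ext p
  simp only [Ideal.mem_iInf, mem_restrictSupportIdeal_iff, Set.subset_iInter_iff]

theorem span_X_sup_iInf_span_X_pow {ι : Type*} (i₀ : σ) (k : ι → σ → ℕ) :
    Ideal.span {X i₀} ⊔ ⨅ j, Ideal.span {P : MvPolynomial σ R | ∃ i, P = X i ^ (k j i + 1)} =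
      restrictSupportIdeal R
        (↑(upperClosure {Finsupp.single i₀ 1}) ∪
          ⋂ j, ↑(upperClosure (Set.range fun i => Finsupp.single i (k j i + 1))))
        ((upperClosure _).upper.union (isUpperSet_iInter fun _ => (upperClosure _).upper)) := by
  have hX : ({X i₀} : Set (MvPolynomial σ R)) =
      (fun s => monomial s 1) '' {Finsupp.single i₀ 1} := by
    simp [X]
  have hXpow (j : ι) : {P : MvPolynomial σ R | ∃ i, P = X i ^ (k j i + 1)} =
      (fun s => monomial s 1) '' Set.range fun i => Finsupp.single i (k j i + 1) := by
    ext P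
    simp [X_pow_eq_monomial, eq_comm]
  simp only [hX, hXpow, span_monomial_image_eq_restrictSupportIdeal, iInf_restrictSupportIdeal,
    restrictSupportIdeal_sup]

variable (R) in
theorem isCompl_restrictSupport_compl (D : Set (σ →₀ ℕ)) :
    IsCompl (restrictSupport R D) (restrictSupport R Dᶜ) := by
  constructor
  · rw [Submodule.disjoint_def]
    intro p hp hp'
    rw [mem_restrictSupport_iff] at hp hp'
    rw [← support_eq_empty, ← Finset.coe_eq_empty, ← Set.subset_empty_iff,
      ← Set.inter_compl_self D]
    exact Set.subset_inter hp hp'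
  · rw [codisjoint_iff, restrictSupport_eq_span, restrictSupport_eq_span, ← Submodule.span_union,
      ← Set.image_union, Set.union_compl_self, ← restrictSupport_eq_span, restrictSupport_univ]

theorem finrank_quotient_restrictSupportIdeal {K : Type*} [Field K] {D : Set (σ →₀ ℕ)}
    (hD : IsUpperSet D) :
    Module.finrank K (MvPolynomial σ K ⧸ restrictSupportIdeal K D hD) = Dᶜ.ncard := by
  rw [← (Submodule.Quotient.restrictScalarsEquiv K _).finrank_eq,
    restrictScalars_restrictSupportIdeal,
    (Submodule.quotientEquivOfIsCompl _ _ (isCompl_restrictSupport_compl K D)).finrank_eq,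
    Module.finrank_eq_nat_card_basis (basisRestrictSupport K Dᶜ), Nat.card_coe_set_eq]

end MvPolynomial

theorem Finset.inf'_Iic {α ι : Type*} [Lattice α] [LocallyFiniteOrderBot α] [DecidableEq α]
    {t : Finset ι} (ht : t.Nonempty) (f : ι → α) :
    t.inf' ht (fun j => Iic (f j)) = Iic (t.inf' ht f) := by
  ext x
  rw [← singleton_subset_iff, le_inf'_iff, mem_Iic, le_inf'_iff]
  simp

theorem Finsupp.card_Iic_eq_prod {σ : Type*} [Fintype σ] [DecidableEq σ] (f : σ →₀ ℕ) :
    #(Iic f) = ∏ i, (f i + 1) := by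
  rw [Finsupp.card_Iic, prod_subset (subset_univ _) fun i _ hi => by
    rw [Finsupp.notMem_support_iff.mp hi]; rfl]
  simp

theorem Finsupp.finset_inf'_apply {σ ι α : Type*} [Zero α] [SemilatticeInf α] {t : Finset ι}
    (ht : t.Nonempty) (f : ι → σ →₀ α) (i : σ) : t.inf' ht f i = t.inf' ht fun j => f j i :=
  apply_inf'_eq_inf'_comp ht (fun g : σ →₀ α => g i) fun g h => Finsupp.inf_apply g h i

theorem compl_upperClosure_eq_biUnion_Iic {n : ℕ} {J : Type*} [Fintype J]
    (a : J → Fin (n + 1) → ℕ) :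
    ((upperClosure {Finsupp.single (0 : Fin (n + 1)) 1} : Set (Fin (n + 1) →₀ ℕ)) ∪
        ⋂ j, ↑(upperClosure (Set.range fun i => Finsupp.single i (a j i + 1))))ᶜ =
      ↑(univ.biUnion fun j =>
        Iic (Finsupp.equivFunOnFinite.symm (Fin.cons 0 fun i => a j i.succ))) := by
  ext d
  simp only [Set.mem_compl_iff, Set.mem_union, Set.mem_iInter, SetLike.mem_coe, mem_upperClosure,
    Set.mem_singleton_iff, exists_eq_left, Set.mem_range, exists_exists_eq_and,
    Finsupp.single_le_iff]
  simp +contextual [Finsupp.le_def, Fin.forall_fin_succ]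

theorem dim_apolar_quotient_general (n : ℕ) (J : Type) [Fintype J]
    (a : J → Fin (n + 1) → ℕ) :
    (Module.finrank ℂ
        (MvPolynomial (Fin (n + 1)) ℂ ⧸
          (Ideal.span {X (0 : Fin (n + 1))} +
            ⨅ j, Ideal.span
              {P : MvPolynomial (Fin (n + 1)) ℂ | ∃ i, P = X i ^ (a j i + 1)})) : ℤ) =
      ∑ S ∈ ((Finset.univ : Finset J).powerset.filter Finset.Nonempty).attach,
        (-1 : ℤ) ^ (S.1.card + 1) *
          ∏ i : Fin n,
            ((S.1.inf' (Finset.mem_filter.mp S.2).2 fun j => a j i.succ : ℕ) + 1 : ℤ) := by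
  rw [Submodule.add_eq_sup, span_X_sup_iInf_span_X_pow, finrank_quotient_restrictSupportIdeal,
    compl_upperClosure_eq_biUnion_Iic, Set.ncard_coe_finset, inclusion_exclusion_card_biUnion,
    univ_eq_attach]
  push_cast
  refine sum_congr rfl fun t _ => ?_
  simp [Finset.inf'_Iic, Finsupp.card_Iic_eq_prod, Finsupp.finset_inf'_apply, Fin.prod_univ_succ]

/-- With monomials `M_j = x_0^{a_{0,j}} ⋯ x_n^{a_{n,j}}`, `1 ≤ a_{0,j} ≤ a_{i,j}` for all
`i, j`, the `ℂ`-dimension of `A = T/((X_0) + ⋂_j M_j^⊥)` (where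
`M_j^⊥ = (X_0^{a_{0,j}+1},…,X_n^{a_{n,j}+1})`) equals
`∑_{∅ ≠ S ⊆ J} (−1)^{|S|+1} ∏_{i=1}^n (min_{j ∈ S} a_{i,j} + 1)`. -/
theorem dim_apolar_quotient (n : ℕ) (J : Type) [Fintype J] [DecidableEq J]
    (a : J → Fin (n + 1) → ℕ) (h1 : ∀ j i, 1 ≤ a j i) (h0 : ∀ j i, a j 0 ≤ a j i) :
    (Module.finrank ℂ
        (MvPolynomial (Fin (n + 1)) ℂ ⧸
          (Ideal.span {X (0 : Fin (n + 1))} +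
            ⨅ j, Ideal.span
              {P : MvPolynomial (Fin (n + 1)) ℂ | ∃ i, P = X i ^ (a j i + 1)})) : ℤ) =
      ∑ S ∈ ((Finset.univ : Finset J).powerset.filter Finset.Nonempty).attach,
        (-1 : ℤ) ^ (S.1.card + 1) *
          ∏ i : Fin n,
            ((S.1.inf' (Finset.mem_filter.mp S.2).2 fun j => a j i.succ : ℕ) + 1 : ℤ) :=
  dim_apolar_quotient_general n J a
end
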